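/- arXiv:1604.08929 — 2 statements merged into one kernel-verified Lean document; each statement's English description precedes it below -/
import Mathlib

section
/- Let S be a numerical semigroup with the Arf property, multiplicity m and conductor c. For each j ∈ {2, 3, …, m−1}: (i) if w(j−1) < w(j), then c ≤ w(j) − 1; (ii) if w(j) < w(j−1), then c ≤ w(j−1). -/
/-- A numerical semigroup: a subset of ℕ containing 0, closed under addition,
with finite complement. -/
def IsNumericalSemigroup (S : Set ℕ) : Prop :=
  0 ∈ S ∧ (∀ a ∈ S, ∀ b ∈ S, a + b ∈ S) ∧ Sᶜ.Finite

/-- The Arf property: for all x ≥ y ≥ z in S, x + y - z ∈ S. -/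
def HasArfProperty (S : Set ℕ) : Prop :=
  ∀ x ∈ S, ∀ y ∈ S, ∀ z ∈ S, z ≤ y → y ≤ x → x + y - z ∈ S

/-- The conductor: the least c such that every n ≥ c lies in S. -/
noncomputable def conductorOf (S : Set ℕ) : ℕ := sInf {c | ∀ n, c ≤ n → n ∈ S}

/-- The Frobenius number: the largest natural number not in S. -/
noncomputable def frobeniusOf (S : Set ℕ) : ℕ := sSup {n | n ∉ S}

/-- The genus: the number of gaps of S. -/
noncomputable def genusOf (S : Set ℕ) : ℕ := Sᶜ.ncard

/-- The multiplicity: the least positive element of S. -/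
noncomputable def multiplicityOf (S : Set ℕ) : ℕ := sInf {n | n ∈ S ∧ 0 < n}

/-- w(i) = min { s ∈ S : s ≡ i (mod m) }. -/
noncomputable def aperyW (S : Set ℕ) (m i : ℕ) : ℕ := sInf {s | s ∈ S ∧ s % m = i}

/-- The cocycle h(i,j) = (w(i) + w(j) - w((i+j) mod m)) / m, as a rational number. -/
noncomputable def cocycle (S : Set ℕ) (m i j : ℕ) : ℚ :=
  ((aperyW S m i : ℚ) + (aperyW S m j : ℚ) - (aperyW S m ((i + j) % m) : ℚ)) / (m : ℚ)

/-- An Arf sequence (x₁, …, xₙ), 0-indexed: xₙ ≥ ⋯ ≥ x₁ ≥ 2, and each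
x_{i+1} is either a sum x_i + ⋯ + x_j for some j ≤ i, or at least x_i + ⋯ + x₁. -/
def ArfSeq (n : ℕ) (x : Fin n → ℕ) : Prop :=
  1 ≤ n ∧ Monotone x ∧ (∀ i, 2 ≤ x i) ∧
  ∀ i : Fin n, ∀ h : i.1 + 1 < n,
    (∃ j : Fin n, j ≤ i ∧ x ⟨i.1 + 1, h⟩ = ∑ k ∈ Finset.Icc j i, x k) ∨
    (∑ k ∈ Finset.Iic i, x k) ≤ x ⟨i.1 + 1, h⟩

/-- The set S(x₁,…,xₙ) = {0} ∪ {xₙ + ⋯ + x_k : 1 ≤ k ≤ n} ∪ {z : z ≥ x₁ + ⋯ + xₙ}. -/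
def arfSet (n : ℕ) (x : Fin n → ℕ) : Set ℕ :=
  {z | z = 0 ∨ (∃ k : Fin n, z = ∑ i ∈ Finset.Ici k, x i) ∨ (∑ i, x i) ≤ z}

/-- The numerical-semigroup-like set generated by A ⊆ ℕ. -/
def genNS (A : Set ℕ) : Set ℕ := (AddSubmonoid.closure A : Set ℕ)

/-!
Since `S + m ⊆ S`, every number above an element of `S` in its residue class mod `m` lies in `S`.
The Apéry elements `w(j - 1)` and `w(j)` lie in adjacent residue classes, so if `w(j - 1) < w(j)` then
`w(j) - 1 ∈ S`, and if `w(j) < w(j - 1)` then `w(j - 1) + 1 ∈ S`. Either way `S` contains two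
consecutive integers `t, t + 1`, and the Arf property then gives every `n ≥ t` inductively, as
`n + 1 = n + (t + 1) - t`.
-/

section NumericalSemigroup

variable {S : Set ℕ}

theorem exists_forall_ge_mem_of_compl_finite (hfin : Sᶜ.Finite) : ∃ N, ∀ n, N ≤ n → n ∈ S := by
  obtain ⟨N, hN⟩ := hfin.bddAbove
  exact ⟨N + 1, fun n hn => by_contra fun h => absurd (hN h) (by omega)⟩

theorem multiplicityOf_mem (hfin : Sᶜ.Finite) : multiplicityOf S ∈ S ∧ 0 < multiplicityOf S := by
  obtain ⟨N, hN⟩ := exists_forall_ge_mem_of_compl_finite hfin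
  exact Nat.sInf_mem (s := {n | n ∈ S ∧ 0 < n}) ⟨N + 1, hN _ N.le_succ, N.succ_pos⟩

theorem aperyW_mem {m i : ℕ} (hfin : Sᶜ.Finite) (hi : i < m) :
    aperyW S m i ∈ S ∧ aperyW S m i % m = i := by
  obtain ⟨N, hN⟩ := exists_forall_ge_mem_of_compl_finite hfin
  refine Nat.sInf_mem (s := {s | s ∈ S ∧ s % m = i}) ⟨i + N * m, hN _ ?_, ?_⟩
  · nlinarith
  · rw [Nat.add_mul_mod_self_right, Nat.mod_eq_of_lt hi]

theorem add_mul_mem {m : ℕ} (hadd : ∀ a ∈ S, ∀ b ∈ S, a + b ∈ S) (hmS : m ∈ S) {s : ℕ}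
    (hs : s ∈ S) (k : ℕ) : s + k * m ∈ S := by
  induction k with
  | zero => simpa using hs
  | succ k ih => simpa [add_mul, ← add_assoc] using hadd _ ih _ hmS

theorem mem_of_modEq_of_le {m : ℕ} (hadd : ∀ a ∈ S, ∀ b ∈ S, a + b ∈ S) (hmS : m ∈ S)
    {s t : ℕ} (hs : s ∈ S) (hst : s ≡ t [MOD m]) (hle : s ≤ t) : t ∈ S := by
  obtain ⟨k, hk⟩ := (Nat.modEq_iff_dvd' hle).1 hst
  have ht : t = s + k * m := by rw [mul_comm]; omega
  exact ht ▸ add_mul_mem hadd hmS hs k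

theorem HasArfProperty.mem_of_le_of_succ_mem {t : ℕ} (hA : HasArfProperty S) (ht : t ∈ S)
    (ht' : t + 1 ∈ S) {n : ℕ} (hn : t ≤ n) : n ∈ S := by
  induction n, hn using Nat.le_induction with
  | base => exact ht
  | succ n hn ih =>
    rcases hn.eq_or_lt with rfl | hlt
    · exact ht'
    · simpa [show n + (t + 1) - t = n + 1 by omega] using hA n ih _ ht' t ht (by omega) hlt

theorem conductorOf_le {t : ℕ} (h : ∀ n, t ≤ n → n ∈ S) : conductorOf S ≤ t :=
  Nat.sInf_le h

end NumericalSemigroup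

theorem arf_conductor_le_aperyW (S : Set ℕ) (hS : IsNumericalSemigroup S)
    (hA : HasArfProperty S) (m : ℕ) (hm : m = multiplicityOf S) :
    ∀ j, 2 ≤ j → j ≤ m - 1 →
      (aperyW S m (j - 1) < aperyW S m j → conductorOf S ≤ aperyW S m j - 1) ∧
      (aperyW S m j < aperyW S m (j - 1) → conductorOf S ≤ aperyW S m (j - 1)) := by
  intro j hj2 hjm
  obtain ⟨-, hadd, hfin⟩ := hS
  obtain ⟨hmS, hm0⟩ : m ∈ S ∧ 0 < m := hm ▸ multiplicityOf_mem hfin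
  set a := aperyW S m (j - 1)
  set b := aperyW S m j
  obtain ⟨ha, ha_mod⟩ : a ∈ S ∧ a % m = j - 1 := aperyW_mem hfin (by omega)
  obtain ⟨hb, hb_mod⟩ : b ∈ S ∧ b % m = j := aperyW_mem hfin (by omega)
  have hab : a + 1 ≡ b [MOD m] := by
    change (a + 1) % m = b % m
    rw [Nat.add_mod, ha_mod, hb_mod, Nat.mod_eq_of_lt (by omega : 1 < m),
      Nat.mod_eq_of_lt (by omega : j - 1 + 1 < m)]
    omega
  refine ⟨fun hlt => conductorOf_le fun n hn => hA.mem_of_le_of_succ_mem ?_ ?_ hn,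
    fun hlt => conductorOf_le fun n hn => hA.mem_of_le_of_succ_mem ha ?_ hn⟩
  · refine mem_of_modEq_of_le hadd hmS ha (Nat.ModEq.add_right_cancel' 1 ?_) (by omega)
    rwa [Nat.sub_add_cancel (by omega : 1 ≤ b)]
  · rwa [Nat.sub_add_cancel (by omega : 1 ≤ b)]
  · exact mem_of_modEq_of_le hadd hmS hb hab.symm (by omega)
end

section
/- Let S be a numerical semigroup with the Arf property, multiplicity m, conductor c and Kunz coordinates (x_1, …, x_{m−1}). For every i ∈ {2, …, m−1}: (i) if x_{i−1} ≤ x_i, then (c − i + 1)/m ≤ x_i; (ii) if x_i ≤ x_{i−1}, then (c − i + 1)/m ≤ x_{i−1}. (The inequalities are inequalities of rational numbers.) -/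
/-!
In an Arf semigroup two consecutive elements `a, a + 1` already force every `n ≥ a` into `S`
(apply the Arf property to `a + k + 1 ≥ a + k + 1 ≥ a + k`), so `c ≤ a`. Adding multiples of
`m` to the Apéry elements `x_{i-1} m + (i - 1)` and `x_i m + i` produces such a pair at
`max(x_{i-1}, x_i) m + (i - 1)`, which gives `c ≤ max(x_{i-1}, x_i) m + i - 1`.
-/

namespace IsNumericalSemigroup

variable {S : Set ℕ}

theorem exists_forall_ge_mem (hS : IsNumericalSemigroup S) : ∃ B, ∀ n, B ≤ n → n ∈ S := by
  obtain ⟨B, hB⟩ := hS.2.2.bddAbove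
  exact ⟨B + 1, fun n hn => by_contra fun h => absurd (hB h) (by omega)⟩

theorem add_mul_mem (hS : IsNumericalSemigroup S) {a b : ℕ} (ha : a ∈ S) (hb : b ∈ S)
    (k : ℕ) : a + k * b ∈ S := by
  induction k with
  | zero => simpa using ha
  | succ k ih => simpa [add_mul, ← add_assoc] using hS.2.1 _ ih _ hb

theorem mul_add_mem_of_le (hS : IsNumericalSemigroup S) {m u w j : ℕ} (hm : m ∈ S)
    (h : u * m + j ∈ S) (huw : u ≤ w) : w * m + j ∈ S := by
  obtain ⟨k, rfl⟩ := Nat.exists_eq_add_of_le huw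
  simpa [add_mul, add_right_comm] using hS.add_mul_mem h hm k

theorem multiplicityOf_mem (hS : IsNumericalSemigroup S) :
    multiplicityOf S ∈ S ∧ 0 < multiplicityOf S := by
  obtain ⟨B, hB⟩ := hS.exists_forall_ge_mem
  exact Nat.sInf_mem (s := {n | n ∈ S ∧ 0 < n}) ⟨B + 1, hB _ B.le_succ, B.succ_pos⟩

theorem aperyW_mem (hS : IsNumericalSemigroup S) {m k : ℕ} (hm : 0 < m) (hk : k < m) :
    aperyW S m k ∈ S := by
  obtain ⟨B, hB⟩ := hS.exists_forall_ge_mem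
  have hB' : B ≤ k + B * m := le_add_left (Nat.le_mul_of_pos_right B hm)
  have hne : {s | s ∈ S ∧ s % m = k}.Nonempty :=
    ⟨k + B * m, hB _ hB', by rw [Nat.add_mul_mod_self_right, Nat.mod_eq_of_lt hk]⟩
  exact (Nat.sInf_mem hne).1

end IsNumericalSemigroup

namespace HasArfProperty

variable {S : Set ℕ}

theorem forall_ge_mem (hA : HasArfProperty S) {a : ℕ} (ha : a ∈ S) (ha₁ : a + 1 ∈ S) :
    ∀ n, a ≤ n → n ∈ S := by
  have pair : ∀ k, a + k ∈ S ∧ a + k + 1 ∈ S := by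
    intro k
    induction k with
    | zero => exact ⟨ha, ha₁⟩
    | succ k ih =>
      have h := hA _ ih.2 _ ih.2 _ ih.1 (Nat.le_succ _) le_rfl
      rw [show a + k + 1 + (a + k + 1) - (a + k) = a + (k + 1) + 1 by omega] at h
      exact ⟨ih.2, h⟩
  intro n hn
  simpa [Nat.add_sub_cancel' hn] using (pair (n - a)).1

theorem conductorOf_le (hA : HasArfProperty S) {a : ℕ} (ha : a ∈ S) (ha₁ : a + 1 ∈ S) :
    conductorOf S ≤ a :=
  Nat.sInf_le (hA.forall_ge_mem ha ha₁)

theorem conductorOf_le_max_mul_add (hA : HasArfProperty S) (hS : IsNumericalSemigroup S)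
    {m u v j : ℕ} (hm : m ∈ S) (hu : u * m + j ∈ S) (hv : v * m + (j + 1) ∈ S) :
    conductorOf S ≤ max u v * m + j :=
  hA.conductorOf_le (hS.mul_add_mem_of_le hm hu (le_max_left u v))
    (hS.mul_add_mem_of_le hm hv (le_max_right u v))

end HasArfProperty

theorem div_le_of_le_mul_add_pred {c m i y : ℕ} (hm : 0 < m) (hi : 1 ≤ i)
    (h : c ≤ y * m + (i - 1)) : ((c : ℚ) - (i : ℚ) + 1) / (m : ℚ) ≤ (y : ℚ) := by
  rw [div_le_iff₀ (by exact_mod_cast hm)]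
  have hq : (c : ℚ) ≤ y * m + ((i - 1 : ℕ) : ℚ) := by exact_mod_cast h
  push_cast [hi] at hq
  linarith

theorem arf_kunz_lower_bound (S : Set ℕ) (hS : IsNumericalSemigroup S)
    (hA : HasArfProperty S) (m : ℕ) (hm : m = multiplicityOf S)
    (c : ℕ) (hc : c = conductorOf S) (x : ℕ → ℕ)
    (hx : ∀ i < m, aperyW S m i = x i * m + i) :
    ∀ i, 2 ≤ i → i ≤ m - 1 →
      (x (i - 1) ≤ x i → ((c : ℚ) - (i : ℚ) + 1) / (m : ℚ) ≤ (x i : ℚ)) ∧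
      (x i ≤ x (i - 1) → ((c : ℚ) - (i : ℚ) + 1) / (m : ℚ) ≤ (x (i - 1) : ℚ)) := by
  intro i hi₂ him
  obtain ⟨hmS, hm₀⟩ := hm ▸ hS.multiplicityOf_mem
  have kunz_mem : ∀ k < m, x k * m + k ∈ S := fun k hk => hx k hk ▸ hS.aperyW_mem hm₀ hk
  have hc_le : c ≤ max (x (i - 1)) (x i) * m + (i - 1) := by
    have hi : i - 1 + 1 = i := by omega
    refine hc ▸ hA.conductorOf_le_max_mul_add hS hmS (kunz_mem _ (by omega)) ?_
    exact hi ▸ kunz_mem i (by omega)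
  refine ⟨fun hle => ?_, fun hle => ?_⟩
  · exact div_le_of_le_mul_add_pred hm₀ (by omega) (by rwa [max_eq_right hle] at hc_le)
  · exact div_le_of_le_mul_add_pred hm₀ (by omega) (by rwa [max_eq_left hle] at hc_le)
end
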